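/- For two univariate Gaussian densities ν = N(μ₁, σ₁²) and λ = N(μ₂, σ₂²), the squared Hellinger distance equals 1 − √(2σ₁σ₂/(σ₁²+σ₂²)) · exp(−(μ₁−μ₂)²/(4(σ₁²+σ₂²))). -/

import Mathlib

open MeasureTheory Real

/-- Density of a one-dimensional Gaussian with mean μ and standard deviation σ. -/
noncomputable def gaussDensity (μ σ x : ℝ) : ℝ :=
  (1 / (σ * Real.sqrt (2 * Real.pi))) * Real.exp (-(x - μ)^2 / (2 * σ^2))

/-! The square root of each density is, up to a constant, a Gaussian bump `exp (-a (x - μ)²)`,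
and the product of two bumps is again a bump, by completing the square in the exponent:
its centre is the weighted mean of `μ₁, μ₂` and the mismatch of the means survives as the
constant factor `exp (-(μ₁ - μ₂)² / (4 (σ₁² + σ₂²)))`. What is left is the Gaussian integral. -/

theorem mul_sub_sq_add_mul_sub_sq {a b : ℝ} (hab : a + b ≠ 0) (x μ₁ μ₂ : ℝ) :
    a * (x - μ₁) ^ 2 + b * (x - μ₂) ^ 2 =
      (a + b) * (x - (a * μ₁ + b * μ₂) / (a + b)) ^ 2 + a * b / (a + b) * (μ₁ - μ₂) ^ 2 := by
  field_simp
  ring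

theorem integral_exp_neg_mul_sub_sq (b m : ℝ) :
    ∫ x : ℝ, exp (-b * (x - m) ^ 2) = √(π / b) := by
  rw [integral_sub_right_eq_self (fun x => exp (-b * x ^ 2)) m, integral_gaussian]

theorem integral_exp_neg_mul_sub_sq_mul_exp {a b : ℝ} (hab : a + b ≠ 0) (μ₁ μ₂ : ℝ) :
    ∫ x : ℝ, exp (-a * (x - μ₁) ^ 2) * exp (-b * (x - μ₂) ^ 2) =
      exp (-(a * b / (a + b)) * (μ₁ - μ₂) ^ 2) * √(π / (a + b)) := by
  have hbump : ∀ x, exp (-a * (x - μ₁) ^ 2) * exp (-b * (x - μ₂) ^ 2) =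
      exp (-(a * b / (a + b)) * (μ₁ - μ₂) ^ 2) *
        exp (-(a + b) * (x - (a * μ₁ + b * μ₂) / (a + b)) ^ 2) := by
    intro x
    rw [← exp_add, ← exp_add]
    congr 1
    linear_combination -mul_sub_sq_add_mul_sub_sq hab x μ₁ μ₂
  simp_rw [hbump]
  rw [integral_const_mul, integral_exp_neg_mul_sub_sq]

theorem gaussDensity_eq_mul_sq (μ σ x : ℝ) :
    gaussDensity μ σ x = (σ * √(2 * π))⁻¹ * exp (-(1 / (4 * σ ^ 2)) * (x - μ) ^ 2) ^ 2 := by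
  rw [gaussDensity, one_div, ← exp_nat_mul]
  congr 2
  field_simp
  ring

theorem sqrt_gaussDensity_mul_gaussDensity {σ₁ σ₂ : ℝ} (hσ₁ : 0 < σ₁) (hσ₂ : 0 < σ₂)
    (μ₁ μ₂ x : ℝ) :
    √(gaussDensity μ₁ σ₁ x * gaussDensity μ₂ σ₂ x) =
      √((2 * π * σ₁ * σ₂)⁻¹) *
        (exp (-(1 / (4 * σ₁ ^ 2)) * (x - μ₁) ^ 2) * exp (-(1 / (4 * σ₂ ^ 2)) * (x - μ₂) ^ 2)) := by
  rw [sqrt_eq_iff_eq_sq (by unfold gaussDensity; positivity) (by positivity), mul_pow,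
    sq_sqrt (by positivity), gaussDensity_eq_mul_sq, gaussDensity_eq_mul_sq]
  have h2π : √(2 * π) ^ 2 = 2 * π := sq_sqrt (by positivity)
  field_simp
  linear_combination -h2π

/-- For two univariate Gaussian densities `N(μ₁,σ₁²)` and `N(μ₂,σ₂²)`, the squared
Hellinger distance `1 − ∫ √(νλ)` equals
`1 − √(2σ₁σ₂/(σ₁²+σ₂²)) · exp(−(μ₁−μ₂)²/(4(σ₁²+σ₂²)))`. -/
theorem hellinger_sq_gaussian (μ₁ μ₂ σ₁ σ₂ : ℝ) (hσ₁ : 0 < σ₁) (hσ₂ : 0 < σ₂) :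
    1 - (∫ x, Real.sqrt (gaussDensity μ₁ σ₁ x * gaussDensity μ₂ σ₂ x)) =
      1 - Real.sqrt (2 * σ₁ * σ₂ / (σ₁^2 + σ₂^2)) *
        Real.exp (-(μ₁ - μ₂)^2 / (4 * (σ₁^2 + σ₂^2))) := by
  simp_rw [sqrt_gaussDensity_mul_gaussDensity hσ₁ hσ₂]
  rw [integral_const_mul, integral_exp_neg_mul_sub_sq_mul_exp (by positivity)]
  have hexp : -(1 / (4 * σ₁ ^ 2) * (1 / (4 * σ₂ ^ 2)) / (1 / (4 * σ₁ ^ 2) + 1 / (4 * σ₂ ^ 2))) *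
      (μ₁ - μ₂) ^ 2 = -(μ₁ - μ₂) ^ 2 / (4 * (σ₁ ^ 2 + σ₂ ^ 2)) := by
    field_simp
    ring
  have hsqrt : √((2 * π * σ₁ * σ₂)⁻¹) * √(π / (1 / (4 * σ₁ ^ 2) + 1 / (4 * σ₂ ^ 2))) =
      √(2 * σ₁ * σ₂ / (σ₁ ^ 2 + σ₂ ^ 2)) := by
    rw [← sqrt_mul (by positivity)]
    congr 1
    field_simp
    ring
  rw [hexp, ← hsqrt]
  ring
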